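/- arXiv:2007.02619 — 3 statements merged into one kernel-verified Lean document; each statement's English description precedes it below -/
import Mathlib

section
/- Let H ∈ (1/2, 1) and τ > 0. Then H(2H−1) ∫₀^τ ∫₀^τ s · t · |s − t|^{2H−2} ds dt = τ^{2H+2} / (2H + 2). -/
/-!
Write `p = 2H - 2 > -1`. Splitting the inner integral at `s = t` and substituting `u = t - s`,
resp. `u = s - t`, turns both halves into integrals `∫₀^L (a + b u + c u²) u^q du`, which equal
`L^(q+1) (a/(q+1) + b L/(q+2) + c L²/(q+3))`. The outer integral is of the same shape (after the
reflection `u = τ - t` for the `(τ - t)^(p+1)` term), and the total is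
`2 τ^(p+4) / ((p+1)(p+2)(p+4))`; the factor `(p+1)(p+2) = 2H(2H-1)` cancels against `H(2H-1)`.
-/

open Real intervalIntegral
open MeasureTheory Set

section RpowMoments

variable {p q : ℝ}

lemma intervalIntegrable_mul_sub_rpow {g : ℝ → ℝ} (hg : Continuous g) (hq : -1 < q)
    (c a b : ℝ) : IntervalIntegrable (fun x => g x * (c - x) ^ q) volume a b := by
  have h := (intervalIntegrable_rpow' hq (a := c - a) (b := c - b)).comp_sub_left c
  simp only [sub_sub_cancel] at h
  exact h.continuousOn_mul hg.continuousOn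

lemma intervalIntegrable_mul_rpow_sub {g : ℝ → ℝ} (hg : Continuous g) (hq : -1 < q)
    (c a b : ℝ) : IntervalIntegrable (fun x => g x * (x - c) ^ q) volume a b := by
  have h := (intervalIntegrable_rpow' hq (a := a - c) (b := b - c)).comp_sub_right c
  simp only [sub_add_cancel] at h
  exact h.continuousOn_mul hg.continuousOn

lemma integral_zero_rpow (hq : -1 < q) (L : ℝ) :
    ∫ u in (0:ℝ)..L, u ^ q = L ^ (q + 1) / (q + 1) := by
  rw [integral_rpow (Or.inl hq), zero_rpow (by linarith), sub_zero]

lemma integral_quadratic_mul_rpow (hq : -1 < q) {L : ℝ} (hL : 0 ≤ L) (a b c : ℝ) :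
    ∫ u in (0:ℝ)..L, (a + b * u + c * u ^ 2) * u ^ q
      = L ^ (q + 1) * (a / (q + 1) + b * L / (q + 2) + c * L ^ 2 / (q + 3)) := by
  have hq1 : -1 < q + 1 := by linarith
  have hq2 : -1 < q + 2 := by linarith
  calc ∫ u in (0:ℝ)..L, (a + b * u + c * u ^ 2) * u ^ q
      = ∫ u in (0:ℝ)..L, (a * u ^ q + b * u ^ (q + 1) + c * u ^ (q + 2)) := by
        refine integral_congr fun u hu => ?_
        rw [uIcc_of_le hL] at hu
        have h2 : u ^ (q + 2) = u ^ (q + 1) * u := by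
          rw [← rpow_add_one' hu.1 (by linarith)]; ring_nf
        simp only [h2, rpow_add_one' hu.1 (by linarith : q + 1 ≠ 0)]
        ring
    _ = a * (L ^ (q + 1) / (q + 1)) + b * (L ^ (q + 1 + 1) / (q + 1 + 1))
          + c * (L ^ (q + 2 + 1) / (q + 2 + 1)) := by
        rw [integral_add (((intervalIntegrable_rpow' hq).const_mul _).add
            ((intervalIntegrable_rpow' hq1).const_mul _))
            ((intervalIntegrable_rpow' hq2).const_mul _),
          integral_add ((intervalIntegrable_rpow' hq).const_mul _)
            ((intervalIntegrable_rpow' hq1).const_mul _),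
          intervalIntegral.integral_const_mul, intervalIntegral.integral_const_mul,
          intervalIntegral.integral_const_mul,
          integral_zero_rpow hq, integral_zero_rpow hq1, integral_zero_rpow hq2]
    _ = _ := by
        have e2 : L ^ (q + 1 + 1) = L ^ (q + 1) * L := rpow_add_one' hL (by linarith)
        have e3 : L ^ (q + 2 + 1) = L ^ (q + 1) * L ^ 2 := by
          rw [show q + 2 + 1 = q + 1 + 1 + 1 by ring, rpow_add_one' hL (by linarith), e2]
          ring
        rw [e2, e3]
        field_simp
        ring

lemma integral_mul_abs_sub_rpow (hp : -1 < p) {t τ : ℝ} (ht : t ∈ Icc 0 τ) :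
    ∫ s in (0:ℝ)..τ, s * |s - t| ^ p
      = t ^ (p + 1) * (t / (p + 1) - t / (p + 2))
        + (τ - t) ^ (p + 1) * (t / (p + 1) + (τ - t) / (p + 2)) := by
  have habs_left : EqOn (fun s => s * |s - t| ^ p) (fun s => s * (t - s) ^ p) (uIcc 0 t) := by
    intro s hs
    rw [uIcc_of_le ht.1] at hs
    simp only [abs_sub_comm s t, abs_of_nonneg (sub_nonneg.mpr hs.2)]
  have habs_right : EqOn (fun s => s * |s - t| ^ p) (fun s => s * (s - t) ^ p) (uIcc t τ) := by
    intro s hs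
    rw [uIcc_of_le ht.2] at hs
    simp only [abs_of_nonneg (sub_nonneg.mpr hs.1)]
  have hleft : ∫ s in (0:ℝ)..t, s * (t - s) ^ p
      = t ^ (p + 1) * (t / (p + 1) - t / (p + 2)) := by
    calc ∫ s in (0:ℝ)..t, s * (t - s) ^ p
        = ∫ u in (0:ℝ)..t, (t + -1 * u + 0 * u ^ 2) * u ^ p := by
          have h := integral_comp_sub_left (fun u => (t + -1 * u + 0 * u ^ 2) * u ^ p) t
            (a := 0) (b := t)
          simp only [sub_self, sub_zero] at h
          rw [← h]; congr 1; ext s; ring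
      _ = _ := by rw [integral_quadratic_mul_rpow hp ht.1]; ring
  have hright : ∫ s in t..τ, s * (s - t) ^ p
      = (τ - t) ^ (p + 1) * (t / (p + 1) + (τ - t) / (p + 2)) := by
    calc ∫ s in t..τ, s * (s - t) ^ p
        = ∫ u in (0:ℝ)..τ - t, (t + 1 * u + 0 * u ^ 2) * u ^ p := by
          have h := integral_comp_sub_right (fun u => (t + 1 * u + 0 * u ^ 2) * u ^ p) t
            (a := t) (b := τ)
          simp only [sub_self] at h
          rw [← h]; congr 1; ext s; ring
      _ = _ := by rw [integral_quadratic_mul_rpow hp (sub_nonneg.mpr ht.2)]; ring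
  rw [← integral_add_adjacent_intervals (b := t)
      ((intervalIntegrable_congr (habs_left.mono uIoc_subset_uIcc)).mpr
        (intervalIntegrable_mul_sub_rpow continuous_id hp t 0 t))
      ((intervalIntegrable_congr (habs_right.mono uIoc_subset_uIcc)).mpr
        (intervalIntegrable_mul_rpow_sub continuous_id hp t t τ)),
    integral_congr habs_left, integral_congr habs_right, hleft, hright]

theorem integral_integral_mul_mul_abs_sub_rpow (hp : -1 < p) {τ : ℝ} (hτ : 0 ≤ τ) :
    ∫ t in (0:ℝ)..τ, ∫ s in (0:ℝ)..τ, s * t * |s - t| ^ p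
      = 2 * τ ^ (p + 4) / ((p + 1) * (p + 2) * (p + 4)) := by
  have hp1 : -1 < p + 1 := by linarith
  set k := 1 / (p + 1) - 1 / (p + 2)
  have hinner : EqOn (fun t => ∫ s in (0:ℝ)..τ, s * t * |s - t| ^ p)
      (fun t => (0 + 0 * t + k * t ^ 2) * t ^ (p + 1)
        + (t ^ 2 / (p + 1) + t * (τ - t) / (p + 2)) * (τ - t) ^ (p + 1)) (uIcc 0 τ) := by
    intro t ht
    rw [uIcc_of_le hτ] at ht
    simp only [mul_right_comm _ t, intervalIntegral.integral_mul_const,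
      integral_mul_abs_sub_rpow hp ht]
    ring
  have hreflect :
      ∫ t in (0:ℝ)..τ, (t ^ 2 / (p + 1) + t * (τ - t) / (p + 2)) * (τ - t) ^ (p + 1) =
        ∫ u in (0:ℝ)..τ,
          (τ ^ 2 / (p + 1) + (τ / (p + 2) - 2 * τ / (p + 1)) * u + k * u ^ 2) * u ^ (p + 1) := by
    have h := integral_comp_sub_left (fun u => (τ ^ 2 / (p + 1)
      + (τ / (p + 2) - 2 * τ / (p + 1)) * u + k * u ^ 2) * u ^ (p + 1)) τ (a := 0) (b := τ)
    simp only [sub_self, sub_zero] at h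
    rw [← h]; congr 1; ext t; ring
  have hpow : τ ^ (p + 4) = τ ^ (p + 1 + 1) * τ ^ 2 := by
    rw [← rpow_natCast, ← rpow_add' hτ (by push_cast; linarith)]
    push_cast; ring_nf
  rw [integral_congr hinner, integral_add
      ((intervalIntegrable_rpow' hp1).continuousOn_mul (by fun_prop))
      (intervalIntegrable_mul_sub_rpow (by fun_prop) hp1 τ 0 τ),
    hreflect, integral_quadratic_mul_rpow hp1 hτ, integral_quadratic_mul_rpow hp1 hτ, hpow]
  rw [show p + 1 + 1 = p + 2 by ring, show p + 1 + 2 = p + 3 by ring,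
    show p + 1 + 3 = p + 4 by ring]
  have : p + 1 ≠ 0 := by linarith
  have : p + 2 ≠ 0 := by linarith
  have : p + 3 ≠ 0 := by linarith
  have : p + 4 ≠ 0 := by linarith
  simp only [k]
  field_simp
  ring

end RpowMoments

/-- Diagonal covariance entry (Appendix B): for `H ∈ (1/2,1)` and `τ > 0`,
`H(2H−1) ∫₀^τ ∫₀^τ s t |s−t|^{2H−2} ds dt = τ^{2H+2}/(2H+2)`. -/
theorem stmt4 (H : ℝ) (hH : H ∈ Set.Ioo (1/2 : ℝ) 1) (τ : ℝ) (hτ : 0 < τ) :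
    H * (2 * H - 1) *
        ∫ t in (0:ℝ)..τ, ∫ s in (0:ℝ)..τ, s * t * |s - t| ^ (2 * H - 2) =
      τ ^ (2 * H + 2) / (2 * H + 2) := by
  have hH₁ : 0 < 2 * H - 1 := by linarith [hH.1]
  rw [integral_integral_mul_mul_abs_sub_rpow (by linarith) hτ.le,
    show 2 * H - 2 + 1 = 2 * H - 1 by ring, show 2 * H - 2 + 2 = 2 * H by ring,
    show 2 * H - 2 + 4 = 2 * H + 2 by ring, mul_div_assoc',
    div_eq_div_iff (mul_pos (mul_pos hH₁ (by linarith)) (by linarith)).ne' (by linarith)]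
  ring
end

section
/- Let H ∈ (1/2, 1), τ > 0, and let a ≥ 1 be an integer. Then H(2H−1) ∫₀^τ ∫₀^τ u · v · (u − v + aτ)^{2H−2} du dv = −(τ^{2H+2}/2) a^{2H} + (τ^{2H+2}/(2(2H+1))) ((a+1)^{2H+1} − (a−1)^{2H+1}) − (τ^{2H+2}/(2(2H+1)(2H+2))) ((a+1)^{2H+2} − 2a^{2H+2} + (a−1)^{2H+2}). -/
open Real intervalIntegral

/-!
With `q = 2H` the kernel `H(2H-1) x^(2H-2)` is the second derivative of `x^q / 2`. Integrating
first in `u` (an integration by parts against `u`) and then in `v` (against `v`) moves both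
derivatives onto antiderivatives of `x^q`, which are evaluated at `c - τ`, `c`, `c + τ` with
`c = aτ`; homogeneity `(xτ)^p = x^p τ^p` then factors out `τ^(2H+2)`.
-/

theorem continuous_mul_sub_rpow {r : ℝ} (hr : 0 ≤ r) (b : ℝ) :
    Continuous fun v : ℝ => v * (b - v) ^ r :=
  continuous_id.mul ((continuous_rpow_const hr).comp (continuous_const.sub continuous_id))

theorem integral_mul_sub_rpow {r : ℝ} (hr : 0 ≤ r) (b τ : ℝ) :
    ∫ v in (0:ℝ)..τ, v * (b - v) ^ r =
      ((b ^ (r + 2) - (b - τ) ^ (r + 2)) / (r + 2) - τ * (b - τ) ^ (r + 1)) / (r + 1) := by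
  have hr1 : r + 1 ≠ 0 := by linarith
  have hr2 : r + 2 ≠ 0 := by linarith
  have hderiv : ∀ v ∈ Set.uIcc (0:ℝ) τ, HasDerivAt
      (fun v => -(v * (b - v) ^ (r + 1)) / (r + 1) - (b - v) ^ (r + 2) / ((r + 1) * (r + 2)))
      (v * (b - v) ^ r) v := by
    intro v _
    have hsub : HasDerivAt (fun v : ℝ => b - v) (-1) v := by
      simpa using (hasDerivAt_id v).const_sub b
    have h1 := hsub.rpow_const (p := r + 1) (Or.inr (by linarith))
    have h2 := hsub.rpow_const (p := r + 2) (Or.inr (by linarith))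
    refine ((((hasDerivAt_id' v).mul h1).neg.div_const (r + 1)).sub
      (h2.div_const _)).congr_deriv ?_
    rw [show r + 1 - 1 = r by ring, show r + 2 - 1 = r + 1 by ring]
    field_simp
    ring
  have hint : IntervalIntegrable (fun v : ℝ => v * (b - v) ^ r) MeasureTheory.volume 0 τ :=
    (continuous_mul_sub_rpow hr b).intervalIntegrable 0 τ
  rw [integral_eq_sub_of_hasDerivAt hderiv hint, sub_zero]
  field_simp
  ring

theorem mul_integral_mul_add_rpow {q : ℝ} (hq : 1 < q) {d τ : ℝ} (hd : 0 ≤ d)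
    (hτ : 0 ≤ τ) :
    q * (q - 1) * ∫ u in (0:ℝ)..τ, u * (u + d) ^ (q - 2) =
      q * τ * (τ + d) ^ (q - 1) - ((τ + d) ^ q - d ^ q) := by
  have hcont : ContinuousOn (fun u : ℝ => q * u * (u + d) ^ (q - 1) - (u + d) ^ q)
      (Set.Icc 0 τ) := by
    have h1 := continuous_rpow_const (q := q - 1) (by linarith)
    have h2 := continuous_rpow_const (q := q) (by linarith)
    fun_prop
  have hderiv : ∀ u ∈ Set.Ioo (0:ℝ) τ, HasDerivAt
      (fun u : ℝ => q * u * (u + d) ^ (q - 1) - (u + d) ^ q)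
      (q * (q - 1) * (u * (u + d) ^ (q - 2))) u := by
    intro u hu
    have hpos : u + d ≠ 0 := by linarith [hu.1]
    have hadd : HasDerivAt (fun u : ℝ => u + d) 1 u := (hasDerivAt_id u).add_const d
    have h1 := hadd.rpow_const (p := q - 1) (Or.inl hpos)
    have h2 := hadd.rpow_const (p := q) (Or.inl hpos)
    refine ((((hasDerivAt_id' u).const_mul q).mul h1).sub h2).congr_deriv ?_
    rw [show q - 1 - 1 = q - 2 by ring, show q - 1 = q - 2 + 1 by ring,
      rpow_add_one hpos]
    ring
  -- For `d = 0` and `q < 2` the factor `(u + d) ^ (q - 2)` is singular at `u = 0`.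
  have hint : IntervalIntegrable (fun u : ℝ => u * (u + d) ^ (q - 2))
      MeasureTheory.volume 0 τ := by
    have := (intervalIntegrable_rpow' (a := 0 + d) (b := τ + d) (r := q - 2)
      (by linarith)).comp_add_right d
    simp only [add_sub_cancel_right] at this
    exact this.continuousOn_mul continuousOn_id
  rw [← integral_const_mul, integral_eq_sub_of_hasDerivAt_of_le hτ hcont hderiv
    (hint.const_mul _)]
  simp only [zero_add, mul_zero, zero_mul, zero_sub]
  ring

theorem mul_integral_integral_mul_mul_rpow {q : ℝ} (hq : 1 < q) {τ c : ℝ} (hτ : 0 ≤ τ)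
    (hc : τ ≤ c) :
    q * (q - 1) / 2 * ∫ v in (0:ℝ)..τ, ∫ u in (0:ℝ)..τ, u * v * (u - v + c) ^ (q - 2) =
      -(τ ^ 2 / 2) * c ^ q + τ / (2 * (q + 1)) * ((c + τ) ^ (q + 1) - (c - τ) ^ (q + 1))
        - 1 / (2 * (q + 1) * (q + 2)) *
            ((c + τ) ^ (q + 2) - 2 * c ^ (q + 2) + (c - τ) ^ (q + 2)) := by
  have inner : ∀ v ∈ Set.uIcc 0 τ,
      q * (q - 1) / 2 * ∫ u in (0:ℝ)..τ, u * v * (u - v + c) ^ (q - 2) =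
        q * τ / 2 * (v * (c + τ - v) ^ (q - 1)) - 1 / 2 * (v * (c + τ - v) ^ q)
          + 1 / 2 * (v * (c - v) ^ q) := by
    intro v hv
    rw [Set.uIcc_of_le hτ] at hv
    have hshift : (fun u : ℝ => u * v * (u - v + c) ^ (q - 2)) =
        fun u => v * (u * (u + (c - v)) ^ (q - 2)) := by
      funext u
      rw [show u - v + c = u + (c - v) by ring]
      ring
    have h := mul_integral_mul_add_rpow hq (d := c - v) (by linarith [hv.2]) hτ
    rw [show τ + (c - v) = c + τ - v by ring] at h
    rw [hshift, integral_const_mul]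
    linear_combination v / 2 * h
  have hr : 0 ≤ q - 1 := by linarith
  have hq0 : 0 ≤ q := by linarith
  have hint : ∀ {r : ℝ}, 0 ≤ r → ∀ b : ℝ,
      IntervalIntegrable (fun v : ℝ => v * (b - v) ^ r) MeasureTheory.volume 0 τ :=
    fun h b => (continuous_mul_sub_rpow h b).intervalIntegrable 0 τ
  calc _ = ∫ v in (0:ℝ)..τ,
          q * (q - 1) / 2 * ∫ u in (0:ℝ)..τ, u * v * (u - v + c) ^ (q - 2) :=
        (integral_const_mul _ _).symm
    _ = ∫ v in (0:ℝ)..τ, (q * τ / 2 * (v * (c + τ - v) ^ (q - 1))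
          - 1 / 2 * (v * (c + τ - v) ^ q) + 1 / 2 * (v * (c - v) ^ q)) :=
        integral_congr inner
    _ = q * τ / 2 * (∫ v in (0:ℝ)..τ, v * (c + τ - v) ^ (q - 1))
          - 1 / 2 * (∫ v in (0:ℝ)..τ, v * (c + τ - v) ^ q)
          + 1 / 2 * ∫ v in (0:ℝ)..τ, v * (c - v) ^ q := by
        rw [integral_add (((hint hr _).const_mul _).sub ((hint hq0 _).const_mul _))
            ((hint hq0 _).const_mul _),
          integral_sub ((hint hr _).const_mul _) ((hint hq0 _).const_mul _),
          integral_const_mul, integral_const_mul, integral_const_mul]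
    _ = _ := by
        rw [integral_mul_sub_rpow hr, integral_mul_sub_rpow hq0, integral_mul_sub_rpow hq0,
          show q - 1 + 2 = q + 1 by ring, show q - 1 + 1 = q by ring,
          show c + τ - τ = c by ring]
        have : q + 1 ≠ 0 := by linarith
        have : q + 2 ≠ 0 := by linarith
        have : q ≠ 0 := by linarith
        field_simp
        ring

/-- Off-diagonal covariance entry (Appendix B): for `H ∈ (1/2,1)`, `τ > 0`
and an integer `a ≥ 1`,
`H(2H−1) ∫₀^τ ∫₀^τ u v (u−v+aτ)^{2H−2} du dv
  = −(τ^{2H+2}/2) a^{2H}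
    + (τ^{2H+2}/(2(2H+1))) ((a+1)^{2H+1} − (a−1)^{2H+1})
    − (τ^{2H+2}/(2(2H+1)(2H+2))) ((a+1)^{2H+2} − 2a^{2H+2} + (a−1)^{2H+2})`. -/
theorem stmt5 (H : ℝ) (hH : H ∈ Set.Ioo (1/2 : ℝ) 1) (τ : ℝ) (hτ : 0 < τ)
    (a : ℕ) (ha : 1 ≤ a) :
    H * (2 * H - 1) *
        ∫ v in (0:ℝ)..τ, ∫ u in (0:ℝ)..τ, u * v * (u - v + a * τ) ^ (2 * H - 2) =
      -(τ ^ (2 * H + 2) / 2) * (a : ℝ) ^ (2 * H)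
        + τ ^ (2 * H + 2) / (2 * (2 * H + 1)) *
            (((a : ℝ) + 1) ^ (2 * H + 1) - ((a : ℝ) - 1) ^ (2 * H + 1))
        - τ ^ (2 * H + 2) / (2 * (2 * H + 1) * (2 * H + 2)) *
            (((a : ℝ) + 1) ^ (2 * H + 2) - 2 * (a : ℝ) ^ (2 * H + 2)
              + ((a : ℝ) - 1) ^ (2 * H + 2)) := by
  have ha' : (1 : ℝ) ≤ a := Nat.one_le_cast.mpr ha
  have h := mul_integral_integral_mul_mul_rpow (q := 2 * H) (by linarith [hH.1]) hτ.le
    (c := a * τ) (by nlinarith)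
  rw [show 2 * H * (2 * H - 1) / 2 = H * (2 * H - 1) by ring,
    show (a : ℝ) * τ + τ = (a + 1) * τ by ring,
    show (a : ℝ) * τ - τ = (a - 1) * τ by ring] at h
  simp only [mul_rpow (by linarith : (0 : ℝ) ≤ a) hτ.le,
    mul_rpow (by linarith : (0 : ℝ) ≤ a + 1) hτ.le,
    mul_rpow (by linarith : (0 : ℝ) ≤ a - 1) hτ.le] at h
  have hτ1 : τ ^ (2 * H + 1) = τ ^ (2 * H) * τ := rpow_add_one hτ.ne' _
  have hτ2 : τ ^ (2 * H + 2) = τ ^ (2 * H) * τ ^ 2 := by rw [rpow_add hτ, rpow_two]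
  rw [hτ1, hτ2] at h
  rw [h, hτ2]
  ring
end

section
/- Let λ > 0, θ ∈ [0, 1], T ∈ ℝ, and let t₀ ≤ s be real numbers. Then |λ^{−1/2} sin(√λ (T − s)) − λ^{−1/2} sin(√λ (T − t₀)) + (s − t₀) cos(√λ (T − t₀))| ≤ 2 λ^{θ/2} (s − t₀)^{1+θ} / (1 + θ). -/
/-! With `c = √λ`, the left-hand side is `|∫_{t₀}^{s} (cos (c (T - t₀)) - cos (c (T - r))) dr|`,
since `∫ cos (c (T - r)) dr = -c⁻¹ sin (c (T - r))`. Interpolating between the Lipschitz bound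
`|cos x - cos y| ≤ |x - y|` and the uniform bound `|cos x - cos y| ≤ 2`, cosine is `θ`-Hölder with
constant `2`, so the integrand is at most `2 c^θ (r - t₀)^θ`; integrating gives the claim. -/

open Real intervalIntegral

lemma Real.holderWith_cos {θ : NNReal} (hθ : θ ≤ 1) : HolderWith 2 θ cos := by
  have hbdd : HolderWith 2 0 cos := fun x y => by
    rw [NNReal.coe_zero, ENNReal.rpow_zero, mul_one, edist_nndist, ENNReal.coe_le_coe,
      ← NNReal.coe_le_coe, coe_nndist, NNReal.coe_ofNat, dist_eq_norm, Real.norm_eq_abs]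
    linarith [abs_sub (cos x) (cos y), abs_cos_le_one x, abs_cos_le_one y]
  have hC : (1 : NNReal) ^ (θ : ℝ) * 2 ^ ((1 - θ : NNReal) : ℝ) ≤ 2 := by
    rw [NNReal.one_rpow, one_mul]
    simpa using NNReal.rpow_le_rpow_of_exponent_le one_le_two
      (by simp : ((1 - θ : NNReal) : ℝ) ≤ 1)
  simpa using ((holderWith_one.2 lipschitzWith_cos).interpolate hbdd
    (add_tsub_cancel_of_le hθ)).mono hC

lemma integral_cos_mul_sub {c : ℝ} (hc : c ≠ 0) (T a b : ℝ) :
    ∫ r in a..b, cos (c * (T - r)) = c⁻¹ * (sin (c * (T - a)) - sin (c * (T - b))) := by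
  simp_rw [mul_sub]
  rw [integral_comp_sub_mul _ hc, integral_cos, smul_eq_mul, mul_sub]

lemma abs_intervalIntegral_le_of_abs_le_mul_rpow {f : ℝ → ℝ} {a b K θ : ℝ} (hab : a ≤ b)
    (hθ : -1 < θ) (hf : ∀ r ∈ Set.Icc a b, |f r| ≤ K * (r - a) ^ θ) :
    |∫ r in a..b, f r| ≤ K * (b - a) ^ (θ + 1) / (θ + 1) := by
  have hint : IntervalIntegrable (fun r => K * (r - a) ^ θ) MeasureTheory.volume a b := by
    simpa using ((intervalIntegrable_rpow' (a := 0) (b := b - a) hθ).comp_sub_right a).const_mul K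
  calc |∫ r in a..b, f r| ≤ ∫ r in a..b, K * (r - a) ^ θ :=
        norm_integral_le_of_norm_le (f := f) hab
          (.of_forall fun r hr => hf r (Set.Ioc_subset_Icc_self hr)) hint
    _ = K * (b - a) ^ (θ + 1) / (θ + 1) := by
        rw [integral_const_mul, integral_comp_sub_right (· ^ θ), sub_self,
          integral_rpow (.inl hθ), zero_rpow (by linarith)]
        ring

/-- Eigenmode-level deterministic error of the kernel approximation (5.9-0):
for `λ > 0`, `θ ∈ [0,1]`, `T ∈ ℝ` and `t₀ ≤ s`,
`|λ^{−1/2} sin(√λ(T−s)) − λ^{−1/2} sin(√λ(T−t₀)) + (s−t₀) cos(√λ(T−t₀))|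
  ≤ 2 λ^{θ/2} (s−t₀)^{1+θ}/(1+θ)`. -/
theorem stmt16 (l : ℝ) (hl : 0 < l) (θ : ℝ) (hθ : θ ∈ Set.Icc (0:ℝ) 1)
    (T t₀ s : ℝ) (hts : t₀ ≤ s) :
    |l ^ (-(1:ℝ)/2) * Real.sin (Real.sqrt l * (T - s)) -
        l ^ (-(1:ℝ)/2) * Real.sin (Real.sqrt l * (T - t₀)) +
        (s - t₀) * Real.cos (Real.sqrt l * (T - t₀))| ≤
      2 * l ^ (θ / 2) * (s - t₀) ^ (1 + θ) / (1 + θ) := by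
  obtain ⟨hθ0, hθ1⟩ := hθ
  lift θ to NNReal using hθ0
  have hc : 0 < √l := sqrt_pos.2 hl
  have hpow_neg_half : l ^ (-(1:ℝ)/2) = (√l)⁻¹ := by
    rw [neg_div, rpow_neg hl.le, sqrt_eq_rpow, one_div]
  have hpow_half : l ^ ((θ : ℝ) / 2) = √l ^ (θ : ℝ) := by
    rw [sqrt_eq_rpow, ← rpow_mul hl.le, one_div_mul_eq_div]
  have hLHS : l ^ (-(1:ℝ)/2) * sin (√l * (T - s)) - l ^ (-(1:ℝ)/2) * sin (√l * (T - t₀)) +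
      (s - t₀) * cos (√l * (T - t₀)) =
        ∫ r in t₀..s, (cos (√l * (T - t₀)) - cos (√l * (T - r))) := by
    rw [integral_sub intervalIntegrable_const (Continuous.intervalIntegrable (by fun_prop) _ _),
      integral_const, integral_cos_mul_sub hc.ne', hpow_neg_half, smul_eq_mul]
    ring
  have hHolder : ∀ r ∈ Set.Icc t₀ s,
      |cos (√l * (T - t₀)) - cos (√l * (T - r))| ≤ 2 * √l ^ (θ : ℝ) * (r - t₀) ^ (θ : ℝ) := by
    intro r hr
    have hdist : dist (√l * (T - t₀)) (√l * (T - r)) = √l * (r - t₀) := by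
      rw [dist_eq_norm, norm_eq_abs, ← mul_sub, sub_sub_sub_cancel_left,
        abs_of_nonneg (mul_nonneg hc.le (sub_nonneg.2 hr.1))]
    have hcos := (holderWith_cos (mod_cast hθ1)).dist_le (√l * (T - t₀)) (√l * (T - r))
    rwa [hdist, mul_rpow hc.le (sub_nonneg.2 hr.1), ← mul_assoc, dist_eq_norm, norm_eq_abs] at hcos
  rw [hLHS, hpow_half, add_comm 1 (θ : ℝ)]
  exact abs_intervalIntegral_le_of_abs_le_mul_rpow hts (by linarith [θ.2]) hHolder
end
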